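/- arXiv:1605.06801 — 4 statements merged into one kernel-verified Lean document; each statement's English description precedes it below -/
import Mathlib

section
/- Let G be a finite bipartite simple graph with parts V_L and V_R. Form G' from G by adding four new vertices v, b_L, u, r_R with edges: v adjacent to every vertex of V_L, v–b_L; u adjacent to every vertex of V_R, u–r_R. Let the starting position c_0 have a blue piece on b_L and a red piece on r_R. Then the distance game D⟨{1,2},{1}⟩ on G' starting from c_0 is play-for-play equivalent to BiGraph-Node-Kayles on G starting from the empty position: positions correspond by restricting the pieces to V_L ∪ V_R, under this correspondence each player's legal moves agree; in particular, for each player, that player has a winning strategy moving first (respectively, second) in D⟨{1,2},{1}⟩ on (G', c_0) if and only if that player has a winning strategy moving first (respectively, second) in BiGraph-Node-Kayles on G. -/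
universe u

namespace SetTheory

/-- Pre-games, as formerly defined in Mathlib's `SetTheory.PGame` (since removed). -/
inductive PGame : Type (u + 1)
  | mk : ∀ α β : Type u, (α → PGame) → (β → PGame) → PGame

namespace PGame

/-- The type of left moves. -/
def LeftMoves : PGame → Type u
  | mk l _ _ _ => l

/-- The type of right moves. -/
def RightMoves : PGame → Type u
  | mk _ r _ _ => r

/-- The left options. -/
def moveLeft : ∀ g : PGame, LeftMoves g → PGame
  | mk _l _ L _ => L

/-- The right options. -/
def moveRight : ∀ g : PGame, RightMoves g → PGame
  | mk _ _r _ R => R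

/-- The pre-game `0 = {|}`. -/
instance : Zero PGame :=
  ⟨⟨PEmpty, PEmpty, PEmpty.elim, PEmpty.elim⟩⟩

/-- Auxiliary: the pair `(x ≤ y, y ≤ x)`, by nested structural recursion. -/
noncomputable def leAux : PGame.{u} → PGame.{u} → Prop × Prop :=
  fun x => PGame.rec (motive := fun _ => PGame.{u} → Prop × Prop)
    (fun _xl _xr _xL _xR IHL IHR => fun y =>
      PGame.rec (motive := fun _ => Prop × Prop)
        (fun yl yr yL yR JL JR =>
          ((∀ i, ¬(IHL i (mk yl yr yL yR)).2) ∧ (∀ j, ¬(JR j).2),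
           (∀ i, ¬(JL i).1) ∧ (∀ j, ¬(IHR j (mk yl yr yL yR)).1))) y) x

/-- `x ≤ y` iff `∀ i, ¬ y ≤ x.moveLeft i` and `∀ j, ¬ y.moveRight j ≤ x`. -/
noncomputable instance le : LE PGame.{u} :=
  ⟨fun x y => (leAux x y).1⟩

/-- The less or fuzzy relation. -/
def LF (x y : PGame.{u}) : Prop :=
  ¬y ≤ x

infixl:50 " ⧏ " => PGame.LF

/-- Relabellings. -/
inductive Relabelling : PGame.{u} → PGame.{u} → Type (u + 1)
  | mk :
    ∀ {x y : PGame} (L : x.LeftMoves ≃ y.LeftMoves) (R : x.RightMoves ≃ y.RightMoves),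
      (∀ i, Relabelling (x.moveLeft i) (y.moveLeft (L i))) →
        (∀ j, Relabelling (x.moveRight j) (y.moveRight (R j))) → Relabelling x y

infixl:50 " ≡r " => PGame.Relabelling

end PGame

end SetTheory

open SimpleGraph SetTheory

/-- In the distance game `D⟨D,S⟩` on the graph `G`, from the position with blue pieces on
`blue` and red pieces on `red`, Left may legally place a blue piece on the vertex `v`. -/
def LeftMove {W : Type*} (G : SimpleGraph W) (D S : Set ℕ) (blue red : Finset W) (v : W) : Prop :=
  v ∉ blue ∧ v ∉ red ∧ (∀ r ∈ red, ∀ d ∈ D, G.edist v r ≠ (d : ℕ∞)) ∧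
    ∀ b ∈ blue, ∀ s ∈ S, G.edist v b ≠ (s : ℕ∞)

/-- Right may legally place a red piece on the vertex `v`. -/
def RightMove {W : Type*} (G : SimpleGraph W) (D S : Set ℕ) (blue red : Finset W) (v : W) : Prop :=
  v ∉ blue ∧ v ∉ red ∧ (∀ b ∈ blue, ∀ d ∈ D, G.edist v b ≠ (d : ℕ∞)) ∧
    ∀ r ∈ red, ∀ s ∈ S, G.edist v r ≠ (s : ℕ∞)

/-- The distance game `D⟨D,S⟩` on `G` from the position `(blue, red)`, as a combinatorial
game (normal play: a player with no legal move loses). -/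
def distGame {W : Type*} [Fintype W] [DecidableEq W] (G : SimpleGraph W) (D S : Set ℕ)
    (blue red : Finset W) : PGame :=
  PGame.mk {v // LeftMove G D S blue red v} {v // RightMove G D S blue red v}
    (fun x => distGame G D S (insert x.1 blue) red)
    (fun x => distGame G D S blue (insert x.1 red))
termination_by ((blue ∪ red)ᶜ).card
decreasing_by
  · obtain ⟨h1, h2, -, -⟩ := x.2
    calc ((insert x.1 blue ∪ red)ᶜ).card
        = (((blue ∪ red)ᶜ).erase x.1).card := by
          rw [Finset.insert_union, Finset.compl_insert]
      _ < ((blue ∪ red)ᶜ).card :=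
          Finset.card_erase_lt_of_mem (Finset.mem_compl.2 (by simp [h1, h2]))
  · obtain ⟨h1, h2, -, -⟩ := x.2
    calc ((blue ∪ insert x.1 red)ᶜ).card
        = (((blue ∪ red)ᶜ).erase x.1).card := by
          rw [Finset.union_insert, Finset.compl_insert]
      _ < ((blue ∪ red)ᶜ).card :=
          Finset.card_erase_lt_of_mem (Finset.mem_compl.2 (by simp [h1, h2]))

/-- `BiGraph-Node-Kayles` on a bipartite graph `G` with parts `VL`, `VR`, from the position
where `occ` is the set of occupied vertices: players alternately occupy vertices that are
neither equal nor adjacent to a previously occupied vertex, Left occupying only vertices of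
`VL` and Right only vertices of `VR`; a player with no legal move loses. -/
def bnkGame {V : Type*} [Fintype V] [DecidableEq V] (G : SimpleGraph V) (VL VR : Finset V)
    (occ : Finset V) : PGame :=
  PGame.mk {v // v ∈ VL ∧ v ∉ occ ∧ ∀ u ∈ occ, ¬G.Adj v u}
    {v // v ∈ VR ∧ v ∉ occ ∧ ∀ u ∈ occ, ¬G.Adj v u}
    (fun x => bnkGame G VL VR (insert x.1 occ))
    (fun x => bnkGame G VL VR (insert x.1 occ))
termination_by occᶜ.card
decreasing_by
  all_goals
  · obtain ⟨-, h1, -⟩ := x.2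
    calc ((insert x.1 occ)ᶜ).card = (occᶜ.erase x.1).card := by rw [Finset.compl_insert]
      _ < occᶜ.card := Finset.card_erase_lt_of_mem (Finset.mem_compl.2 h1)

/-- The graph `G'` obtained from the bipartite graph `G` (with parts `VL` and `VR`) by adding
four new vertices `v = inr 0`, `bL = inr 1`, `u = inr 2`, `rR = inr 3`, and edges: `v`
adjacent to every vertex of `VL`, `v–bL`; `u` adjacent to every vertex of `VR`, `u–rR`. -/
def gadgetGraph4 {V : Type*} (G : SimpleGraph V) (VL VR : Finset V) :
    SimpleGraph (V ⊕ Fin 4) :=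
  SimpleGraph.fromRel (fun a b =>
    (∃ x y, G.Adj x y ∧ a = Sum.inl x ∧ b = Sum.inl y) ∨
    (∃ x ∈ VL, a = Sum.inr 0 ∧ b = Sum.inl x) ∨
    (a = Sum.inr 0 ∧ b = Sum.inr 1) ∨
    (∃ y ∈ VR, a = Sum.inr 2 ∧ b = Sum.inl y) ∨
    (a = Sum.inr 2 ∧ b = Sum.inr 3))

/-!
The blue guard on `bL` is at distance 2 (through `v`) from exactly the vertices of `V_L`, and
the red guard on `rR` from exactly those of `V_R`. As distance 2 to an opposing piece is
forbidden, Left can only ever play in `V_L` and Right only in `V_R`, while every gadget vertex is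
occupied or adjacent to a guard. A vertex of `V_L` and one of `V_R` have no common neighbour in
`G'`, so the only remaining constraint among original vertices is non-adjacency to every piece:
the rule of BiGraph-Node-Kayles. Legal moves thus correspond, which gives a relabelling of the
two games, and relabellings preserve the outcome.
-/

namespace SetTheory.PGame

theorem leAux_zero_fst (x : PGame.{u}) :
    (leAux x 0).1 ↔ ∀ i, ¬(leAux (x.moveLeft i) 0).2 := by
  cases x; exact ⟨fun h => h.1, fun h => ⟨h, fun j => j.elim⟩⟩

theorem leAux_zero_snd (x : PGame.{u}) :
    (leAux x 0).2 ↔ ∀ j, ¬(leAux (x.moveRight j) 0).1 := by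
  cases x; exact ⟨fun h => h.2, fun h => ⟨fun i => i.elim, h⟩⟩

theorem leAux_zero_left_fst (x : PGame.{u}) :
    (leAux 0 x).1 ↔ ∀ j, ¬(leAux 0 (x.moveRight j)).2 := by
  cases x; exact ⟨fun h => h.2, fun h => ⟨fun i => i.elim, h⟩⟩

theorem leAux_zero_left_snd (x : PGame.{u}) :
    (leAux 0 x).2 ↔ ∀ i, ¬(leAux 0 (x.moveLeft i)).1 := by
  cases x; exact ⟨fun h => h.1, fun h => ⟨h, fun j => j.elim⟩⟩

-- `leAux x y` computes `(x ≤ y, y ≤ x)`, so its second component has to be matched with the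
-- first component of `leAux y x`.
theorem leAux_zero_comm (x : PGame.{u}) :
    ((leAux x 0).1 ↔ (leAux 0 x).2) ∧ ((leAux x 0).2 ↔ (leAux 0 x).1) := by
  induction x with
  | mk xl xr xL xR ihL ihR =>
    rw [leAux_zero_fst, leAux_zero_snd, leAux_zero_left_fst, leAux_zero_left_snd]
    exact ⟨forall_congr' fun i => not_congr (ihL i).2, forall_congr' fun j => not_congr (ihR j).1⟩

theorem le_zero_lf {x : PGame.{u}} : x ≤ 0 ↔ ∀ i, x.moveLeft i ⧏ 0 :=
  (leAux_zero_fst x).trans (forall_congr' fun _ => not_congr (leAux_zero_comm _).2)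

theorem zero_le_lf {x : PGame.{u}} : 0 ≤ x ↔ ∀ j, 0 ⧏ x.moveRight j :=
  (leAux_zero_left_fst x).trans (forall_congr' fun _ => not_congr (leAux_zero_comm _).1.symm)

theorem Relabelling.le_zero_iff_and_zero_le_iff {x y : PGame.{u}} (e : x ≡r y) :
    (x ≤ 0 ↔ y ≤ 0) ∧ (0 ≤ x ↔ 0 ≤ y) := by
  induction e with
  | mk L R _ _ ihL ihR =>
    rw [le_zero_lf, le_zero_lf, zero_le_lf, zero_le_lf]
    exact ⟨L.forall_congr fun i => not_congr (ihL i).2, R.forall_congr fun j => not_congr (ihR j).1⟩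

end SetTheory.PGame

section Gadget

variable {V : Type*} {G : SimpleGraph V} {VL VR : Finset V}

@[simp] theorem gadgetGraph4_adj_inl_inl {x y : V} :
    (gadgetGraph4 G VL VR).Adj (Sum.inl x) (Sum.inl y) ↔ G.Adj x y := by
  grind [gadgetGraph4, fromRel_adj, G.adj_symm, G.ne_of_adj]

@[simp] theorem gadgetGraph4_adj_inl_inr {x : V} {g : Fin 4} :
    (gadgetGraph4 G VL VR).Adj (Sum.inl x) (Sum.inr g) ↔ g = 0 ∧ x ∈ VL ∨ g = 2 ∧ x ∈ VR := by
  grind [gadgetGraph4, fromRel_adj]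

theorem gadgetGraph4_adj_inr_one {w : V ⊕ Fin 4} :
    (gadgetGraph4 G VL VR).Adj (Sum.inr 1) w ↔ w = Sum.inr 0 := by
  grind [gadgetGraph4, fromRel_adj]

theorem gadgetGraph4_adj_inr_three {w : V ⊕ Fin 4} :
    (gadgetGraph4 G VL VR).Adj (Sum.inr 3) w ↔ w = Sum.inr 2 := by
  grind [gadgetGraph4, fromRel_adj]

theorem gadgetGraph4_edist_inl_inr_one {x : V} :
    (gadgetGraph4 G VL VR).edist (Sum.inl x) (Sum.inr 1) = 2 ↔ x ∈ VL := by
  simp [edist_eq_two_iff, Set.Nonempty, mem_commonNeighbors, gadgetGraph4_adj_inr_one]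

theorem gadgetGraph4_edist_inl_inr_three {x : V} :
    (gadgetGraph4 G VL VR).edist (Sum.inl x) (Sum.inr 3) = 2 ↔ x ∈ VR := by
  simp [edist_eq_two_iff, Set.Nonempty, mem_commonNeighbors, gadgetGraph4_adj_inr_three]

theorem gadgetGraph4_edist_inl_inl_ne_two (hparts : Disjoint VL VR)
    (hbip : ∀ ⦃x y : V⦄, G.Adj x y → (x ∈ VL ∧ y ∈ VR) ∨ (x ∈ VR ∧ y ∈ VL))
    {x y : V} (hx : x ∈ VL) (hy : y ∈ VR) :
    (gadgetGraph4 G VL VR).edist (Sum.inl x) (Sum.inl y) ≠ 2 := by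
  have hdisj := Finset.disjoint_left.mp hparts
  rw [Ne, edist_eq_two_iff]
  rintro ⟨-, -, z | g, hz⟩ <;> rw [mem_commonNeighbors] at hz
  · grind [gadgetGraph4_adj_inl_inl]
  · grind [gadgetGraph4_adj_inl_inr, adj_comm]

end Gadget

section Moves

variable {W : Type*} {H : SimpleGraph W} {D S : Set ℕ} {blue red : Finset W} {v : W}

theorem rightMove_iff_leftMove_swap :
    RightMove H D S blue red v ↔ LeftMove H D S red blue v := by
  unfold RightMove LeftMove
  tauto

theorem leftMove_one_two_one_iff :
    LeftMove H {1, 2} {1} blue red v ↔ v ∉ blue ∧ v ∉ red ∧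
      (∀ r ∈ red, ¬H.Adj v r ∧ H.edist v r ≠ 2) ∧ ∀ b ∈ blue, ¬H.Adj v b := by
  simp [LeftMove, ← edist_eq_one_iff_adj]

end Moves

theorem leftMove_inl_iff_of_guards {V β : Type*} [DecidableEq V] [DecidableEq β]
    {H : SimpleGraph (V ⊕ β)} {G : SimpleGraph V}
    {P Q B R : Finset V} {a b : β} (hadj : ∀ x y, H.Adj (Sum.inl x) (Sum.inl y) ↔ G.Adj x y)
    (ha : ∀ x, ¬H.Adj (Sum.inl x) (Sum.inr a)) (hb : ∀ x, ¬H.Adj (Sum.inl x) (Sum.inr b))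
    (hb_two : ∀ x, H.edist (Sum.inl x) (Sum.inr b) = 2 ↔ x ∈ Q) (hP : ∀ x, x ∈ P ↔ x ∉ Q)
    (hPQ : ∀ x ∈ P, ∀ y ∈ Q, H.edist (Sum.inl x) (Sum.inl y) ≠ 2) (hR : R ⊆ Q) (x : V) :
    LeftMove H {1, 2} {1} ({Sum.inr a} ∪ B.image Sum.inl) ({Sum.inr b} ∪ R.image Sum.inl)
        (Sum.inl x) ↔
      x ∈ P ∧ x ∉ B ∪ R ∧ ∀ u ∈ B ∪ R, ¬G.Adj x u := by
  rw [leftMove_one_two_one_iff]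
  simp only [Finset.mem_union, Finset.mem_singleton, Finset.mem_image, forall_eq_or_imp,
    forall_exists_index, and_imp, forall_apply_eq_imp_iff₂, reduceCtorEq, Sum.inl.injEq,
    exists_eq_right, false_or, ne_eq, not_false_eq_true, hadj, ha, hb, hb_two, hP, true_and]
  constructor
  · rintro ⟨hxB, hxR, ⟨hxQ, hRfree⟩, hBfree⟩
    exact ⟨hxQ, fun h => h.elim hxB hxR, fun u hu => hu.elim (hBfree u) fun hu => (hRfree u hu).1⟩
  · rintro ⟨hxQ, hxBR, hfree⟩
    refine ⟨fun h => hxBR (Or.inl h), fun h => hxBR (Or.inr h), ⟨hxQ, fun u hu => ?_⟩,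
      fun u hu => hfree u (Or.inl hu)⟩
    exact ⟨hfree u (Or.inr hu), hPQ x ((hP x).2 hxQ) u (hR hu)⟩

section GadgetMoves

variable {V : Type*} [DecidableEq V] {G : SimpleGraph V} {VL VR : Finset V}

theorem gadgetGraph4_leftMove_inl_iff (hcover : ∀ v : V, v ∈ VL ∨ v ∈ VR)
    (hparts : Disjoint VL VR)
    (hbip : ∀ ⦃x y : V⦄, G.Adj x y → (x ∈ VL ∧ y ∈ VR) ∨ (x ∈ VR ∧ y ∈ VL))
    {B R : Finset V} (hR : R ⊆ VR) (x : V) :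
    LeftMove (gadgetGraph4 G VL VR) {1, 2} {1}
        ({Sum.inr 1} ∪ B.image Sum.inl) ({Sum.inr 3} ∪ R.image Sum.inl) (Sum.inl x) ↔
      x ∈ VL ∧ x ∉ B ∪ R ∧ ∀ u ∈ B ∪ R, ¬G.Adj x u :=
  leftMove_inl_iff_of_guards (fun _ _ => gadgetGraph4_adj_inl_inl) (fun _ => by simp)
    (fun _ => by simp) (fun _ => gadgetGraph4_edist_inl_inr_three)
    (fun y => ⟨fun hy => Finset.disjoint_left.mp hparts hy, (hcover y).resolve_right⟩)
    (fun _ hy _ hz => gadgetGraph4_edist_inl_inl_ne_two hparts hbip hy hz) hR x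

theorem gadgetGraph4_rightMove_inl_iff (hcover : ∀ v : V, v ∈ VL ∨ v ∈ VR)
    (hparts : Disjoint VL VR)
    (hbip : ∀ ⦃x y : V⦄, G.Adj x y → (x ∈ VL ∧ y ∈ VR) ∨ (x ∈ VR ∧ y ∈ VL))
    {B R : Finset V} (hB : B ⊆ VL) (x : V) :
    RightMove (gadgetGraph4 G VL VR) {1, 2} {1}
        ({Sum.inr 1} ∪ B.image Sum.inl) ({Sum.inr 3} ∪ R.image Sum.inl) (Sum.inl x) ↔
      x ∈ VR ∧ x ∉ B ∪ R ∧ ∀ u ∈ B ∪ R, ¬G.Adj x u := by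
  rw [rightMove_iff_leftMove_swap, Finset.union_comm B R]
  exact leftMove_inl_iff_of_guards (fun _ _ => gadgetGraph4_adj_inl_inl) (fun _ => by simp)
    (fun _ => by simp) (fun _ => gadgetGraph4_edist_inl_inr_one)
    (fun y => ⟨fun hy => Finset.disjoint_right.mp hparts hy, (hcover y).resolve_left⟩)
    (fun _ hy _ hz => by
      rw [SimpleGraph.edist_comm]; exact gadgetGraph4_edist_inl_inl_ne_two hparts hbip hz hy) hB x

theorem gadgetGraph4_not_move_inr (blue red : Finset (V ⊕ Fin 4)) (g : Fin 4) :
    ¬LeftMove (gadgetGraph4 G VL VR) {1, 2} {1} ({Sum.inr 1} ∪ blue) ({Sum.inr 3} ∪ red)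
        (Sum.inr g) ∧
      ¬RightMove (gadgetGraph4 G VL VR) {1, 2} {1} ({Sum.inr 1} ∪ blue) ({Sum.inr 3} ∪ red)
        (Sum.inr g) := by
  have h01 : (gadgetGraph4 G VL VR).Adj (Sum.inr 0) (Sum.inr 1) :=
    (gadgetGraph4_adj_inr_one.mpr rfl).symm
  have h23 : (gadgetGraph4 G VL VR).Adj (Sum.inr 2) (Sum.inr 3) :=
    (gadgetGraph4_adj_inr_three.mpr rfl).symm
  rw [rightMove_iff_leftMove_swap, leftMove_one_two_one_iff, leftMove_one_two_one_iff]
  fin_cases g <;> simp [h01, h23]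

end GadgetMoves

noncomputable def subtypeInlEquiv {α β : Type*} {P : α ⊕ β → Prop} {Q : α → Prop}
    (h : ∀ x, P (Sum.inl x) ↔ Q x) (hinr : ∀ b, ¬P (Sum.inr b)) :
    {x // Q x} ≃ {w // P w} :=
  Equiv.ofBijective (fun x => ⟨Sum.inl x, (h x).2 x.2⟩)
    ⟨fun _ _ hxy => Subtype.ext (Sum.inl_injective (congrArg Subtype.val hxy)), fun
      | ⟨.inl x, hw⟩ => ⟨⟨x, (h x).1 hw⟩, rfl⟩
      | ⟨.inr b, hw⟩ => (hinr b hw).elim⟩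

theorem val_eq_inl_subtypeInlEquiv_symm {α β : Type*} {P : α ⊕ β → Prop} {Q : α → Prop}
    (h : ∀ x, P (Sum.inl x) ↔ Q x) (hinr : ∀ b, ¬P (Sum.inr b))
    (w : {w // P w}) : w.1 = Sum.inl ((subtypeInlEquiv h hinr).symm w).1 :=
  congrArg Subtype.val ((subtypeInlEquiv h hinr).apply_symm_apply w).symm

open SetTheory.PGame in
noncomputable def gadgetRelabelling {V : Type*} [Fintype V] [DecidableEq V] {G : SimpleGraph V}
    {VL VR : Finset V} (hcover : ∀ v : V, v ∈ VL ∨ v ∈ VR) (hparts : Disjoint VL VR)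
    (hbip : ∀ ⦃x y : V⦄, G.Adj x y → (x ∈ VL ∧ y ∈ VR) ∨ (x ∈ VR ∧ y ∈ VL))
    (B R : Finset V) (hB : B ⊆ VL) (hR : R ⊆ VR) :
    distGame (gadgetGraph4 G VL VR) {1, 2} {1}
        ({Sum.inr 1} ∪ B.image Sum.inl) ({Sum.inr 3} ∪ R.image Sum.inl) ≡r
      bnkGame G VL VR (B ∪ R) := by
  have hleft := gadgetGraph4_leftMove_inl_iff (B := B) hcover hparts hbip hR
  have hright := gadgetGraph4_rightMove_inl_iff (R := R) hcover hparts hbip hB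
  have hinr := gadgetGraph4_not_move_inr (G := G) (VL := VL) (VR := VR)
    (B.image Sum.inl) (R.image Sum.inl)
  rw [distGame, bnkGame]
  refine Relabelling.mk (subtypeInlEquiv hleft fun g => (hinr g).1).symm
    (subtypeInlEquiv hright fun g => (hinr g).2).symm (fun i => ?_) (fun j => ?_)
  · obtain ⟨hxL, hxBR, -⟩ := ((subtypeInlEquiv hleft fun g => (hinr g).1).symm i).2
    dsimp only [moveLeft]
    rw [val_eq_inl_subtypeInlEquiv_symm hleft _ i, ← Finset.union_insert, ← Finset.image_insert,
      ← Finset.insert_union]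
    exact gadgetRelabelling hcover hparts hbip _ R (Finset.insert_subset hxL hB) hR
  · obtain ⟨hxR, hxBR, -⟩ := ((subtypeInlEquiv hright fun g => (hinr g).2).symm j).2
    dsimp only [moveRight]
    rw [val_eq_inl_subtypeInlEquiv_symm hright _ j, ← Finset.union_insert, ← Finset.image_insert,
      ← Finset.union_insert]
    exact gadgetRelabelling hcover hparts hbip B _ hB (Finset.insert_subset hxR hR)
termination_by ((B ∪ R)ᶜ).card
decreasing_by
  · rw [Finset.insert_union, Finset.compl_insert]
    exact Finset.card_erase_lt_of_mem (Finset.mem_compl.2 hxBR)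
  · rw [Finset.union_insert, Finset.compl_insert]
    exact Finset.card_erase_lt_of_mem (Finset.mem_compl.2 hxBR)

open SetTheory.PGame in
/-- the distance game `D⟨{1,2},{1}⟩` on `G'` starting from the position with a
blue piece on `bL` and a red piece on `rR` is play-for-play equivalent to
`BiGraph-Node-Kayles` on `G` starting from the empty position. -/
theorem stmt3 {V : Type*} [Fintype V] [DecidableEq V] (G : SimpleGraph V) (VL VR : Finset V)
    (hcover : ∀ v : V, v ∈ VL ∨ v ∈ VR) (hparts : Disjoint VL VR)
    (hbip : ∀ ⦃x y : V⦄, G.Adj x y → (x ∈ VL ∧ y ∈ VR) ∨ (x ∈ VR ∧ y ∈ VL)) :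
    -- positions correspond by restricting the pieces to `V_L ∪ V_R`, and under this
    -- correspondence each player's legal moves agree:
    (∀ B R : Finset V, B ⊆ VL → R ⊆ VR →
      (∀ x : V,
        LeftMove (gadgetGraph4 G VL VR) {1, 2} {1}
            ({Sum.inr 1} ∪ B.image Sum.inl) ({Sum.inr 3} ∪ R.image Sum.inl) (Sum.inl x) ↔
          x ∈ VL ∧ x ∉ B ∪ R ∧ ∀ u ∈ B ∪ R, ¬G.Adj x u) ∧
      (∀ x : V,
        RightMove (gadgetGraph4 G VL VR) {1, 2} {1}
            ({Sum.inr 1} ∪ B.image Sum.inl) ({Sum.inr 3} ∪ R.image Sum.inl) (Sum.inl x) ↔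
          x ∈ VR ∧ x ∉ B ∪ R ∧ ∀ u ∈ B ∪ R, ¬G.Adj x u) ∧
      (∀ g : Fin 4,
        ¬LeftMove (gadgetGraph4 G VL VR) {1, 2} {1}
            ({Sum.inr 1} ∪ B.image Sum.inl) ({Sum.inr 3} ∪ R.image Sum.inl) (Sum.inr g) ∧
        ¬RightMove (gadgetGraph4 G VL VR) {1, 2} {1}
            ({Sum.inr 1} ∪ B.image Sum.inl) ({Sum.inr 3} ∪ R.image Sum.inl) (Sum.inr g))) ∧
    -- the two games are play-for-play equivalent:
    Nonempty
      (distGame (gadgetGraph4 G VL VR) {1, 2} {1} {Sum.inr 1} {Sum.inr 3} ≡r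
        bnkGame G VL VR ∅) ∧
    -- in particular, for each player, that player has a winning strategy moving first
    -- (respectively, second) in one game iff in the other:
    ((0 ⧏ distGame (gadgetGraph4 G VL VR) {1, 2} {1} {Sum.inr 1} {Sum.inr 3} ↔
        0 ⧏ bnkGame G VL VR ∅) ∧
      (0 ≤ distGame (gadgetGraph4 G VL VR) {1, 2} {1} {Sum.inr 1} {Sum.inr 3} ↔
        0 ≤ bnkGame G VL VR ∅) ∧
      (distGame (gadgetGraph4 G VL VR) {1, 2} {1} {Sum.inr 1} {Sum.inr 3} ⧏ 0 ↔
        bnkGame G VL VR ∅ ⧏ 0) ∧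
      (distGame (gadgetGraph4 G VL VR) {1, 2} {1} {Sum.inr 1} {Sum.inr 3} ≤ 0 ↔
        bnkGame G VL VR ∅ ≤ 0)) := by
  have e := gadgetRelabelling hcover hparts hbip ∅ ∅ (Finset.empty_subset _) (Finset.empty_subset _)
  rw [Finset.image_empty, Finset.union_empty, Finset.union_empty, Finset.union_empty] at e
  obtain ⟨hle, hge⟩ := e.le_zero_iff_and_zero_le_iff
  exact ⟨fun B R hB hR => ⟨gadgetGraph4_leftMove_inl_iff hcover hparts hbip hR,
    gadgetGraph4_rightMove_inl_iff hcover hparts hbip hB, gadgetGraph4_not_move_inr _ _⟩,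
    ⟨e⟩, not_congr hle, hge, not_congr hge, hle⟩
end

section
/- For every integer r ≥ 1 there exists a finite connected simple graph F with three distinct distinguished vertices p_B, p_R, v such that: the graph distance from p_B to v equals r, the graph distance from p_R to v equals r, the graph distance from p_B to p_R equals r+1, and every vertex u of F other than p_B and p_R satisfies dist(u, p_B) ≤ r and dist(u, p_R) ≤ r. (Consequently, in any distance game D⟨D,S⟩ with D ∪ S ⊆ {1,…,r} and {1,…,r} equal to D or to S, placing a blue piece on p_B and a red piece on p_R is a legal configuration that makes every other vertex of F unplayable by both players, while any vertex attached to F only through v is at distance at least r+1 from p_B and from p_R.) -/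
/-!
Take the king's graph on the grid `[1, r] × [0, r]` and attach `p_B = (0, 0)` and
`p_R = (r + 1, 0)` beside the two ends of the bottom row. Graph distance is then Chebyshev
distance, because from any vertex there is a neighbour one Chebyshev unit closer to any given
target. Hence every grid point is within `r` of both `p_B` and `p_R`, these two are `r + 1`
apart, and `v = (1, r)` is at distance exactly `r` from both.
-/

namespace SimpleGraph

variable {V : Type*} {G : SimpleGraph V} {d : V → V → ℕ}

theorem le_length_of_forall_adj_le (hd : ∀ w, d w w = 0)
    (hadj : ∀ u z w, G.Adj u z → d u w ≤ d z w + 1) {u w : V} (p : G.Walk u w) :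
    d u w ≤ p.length := by
  induction p with
  | nil => simp [hd]
  | cons h q ih => rw [Walk.length_cons]; exact (hadj _ _ _ h).trans (by omega)

theorem exists_walk_length_eq_of_forall_exists_adj (hd : ∀ u w, d u w = 0 ↔ u = w)
    (hstep : ∀ u w, u ≠ w → ∃ z, G.Adj u z ∧ d z w + 1 = d u w) (u w : V) :
    ∃ p : G.Walk u w, p.length = d u w := by
  induction hn : d u w generalizing u with
  | zero => obtain rfl := (hd u w).1 hn; exact ⟨.nil, rfl⟩
  | succ n ih =>
    obtain ⟨z, hz, hzw⟩ := hstep u w fun h => by simp [(hd u w).2 h] at hn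
    obtain ⟨p, hp⟩ := ih z (by omega)
    exact ⟨.cons hz p, by simp [hp]⟩

theorem edist_eq_of_geodesic_steps (hd : ∀ u w, d u w = 0 ↔ u = w)
    (hadj : ∀ u z w, G.Adj u z → d u w ≤ d z w + 1)
    (hstep : ∀ u w, u ≠ w → ∃ z, G.Adj u z ∧ d z w + 1 = d u w) (u w : V) :
    G.edist u w = d u w := by
  obtain ⟨p, hp⟩ := exists_walk_length_eq_of_forall_exists_adj hd hstep u w
  refine le_antisymm (hp ▸ edist_le p) ?_
  obtain ⟨q, hq⟩ := exists_walk_of_edist_ne_top (ne_top_of_le_ne_top (by simp) (hp ▸ edist_le p))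
  rw [← hq]
  exact_mod_cast le_length_of_forall_adj_le (fun w => (hd w w).2 rfl) hadj q

end SimpleGraph

def chebDist (p q : ℤ × ℤ) : ℕ := max (p.1 - q.1).natAbs (p.2 - q.2).natAbs

lemma chebDist_eq_zero {p q : ℤ × ℤ} : chebDist p q = 0 ↔ p = q := by
  rw [chebDist, Prod.ext_iff]; omega

lemma chebDist_triangle (p q w : ℤ × ℤ) : chebDist p w ≤ chebDist p q + chebDist q w := by
  unfold chebDist; omega

def kingGraph : SimpleGraph (ℤ × ℤ) where
  Adj p q := p ≠ q ∧ chebDist p q ≤ 1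
  symm := ⟨fun p q h => ⟨h.1.symm, by unfold chebDist at *; omega⟩⟩
  loopless := ⟨fun p h => h.1 rfl⟩

def stepToward (x a : ℤ) : ℤ := x + max (-1) (min 1 (a - x))

def kingStep (p q : ℤ × ℤ) : ℤ × ℤ := (stepToward p.1 q.1, stepToward p.2 q.2)

lemma chebDist_kingStep_left (p q : ℤ × ℤ) : chebDist p (kingStep p q) ≤ 1 := by
  unfold chebDist kingStep stepToward; omega

lemma chebDist_kingStep_right {p q : ℤ × ℤ} (h : p ≠ q) :
    chebDist (kingStep p q) q + 1 = chebDist p q := by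
  rw [Ne, ← chebDist_eq_zero] at h
  unfold chebDist kingStep stepToward at *; omega

noncomputable def gadgetVertices (r : ℕ) : Finset (ℤ × ℤ) :=
  {(0, 0), ((r : ℤ) + 1, 0)} ∪ Finset.Icc 1 (r : ℤ) ×ˢ Finset.Icc 0 (r : ℤ)

lemma mem_gadgetVertices {r : ℕ} {p : ℤ × ℤ} : p ∈ gadgetVertices r ↔
    p = (0, 0) ∨ p = ((r : ℤ) + 1, 0) ∨ (1 ≤ p.1 ∧ p.1 ≤ r ∧ 0 ≤ p.2 ∧ p.2 ≤ r) := by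
  simp [gadgetVertices, and_assoc]

/-- The diagonal king step can leave the vertex set only when it would enter column `0` or
`r + 1` above `p_B` or `p_R`; the vertical step down works instead. -/
lemma exists_chebDist_step {r : ℕ} {p q : ℤ × ℤ} (hp : p ∈ gadgetVertices r)
    (hq : q ∈ gadgetVertices r) (hpq : p ≠ q) :
    ∃ z ∈ gadgetVertices r, chebDist p z ≤ 1 ∧ chebDist z q + 1 = chebDist p q := by
  by_cases hdiag : kingStep p q ∈ gadgetVertices r
  · exact ⟨_, hdiag, chebDist_kingStep_left p q, chebDist_kingStep_right hpq⟩
  obtain ⟨x, y⟩ := p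
  obtain ⟨a, b⟩ := q
  simp only [mem_gadgetVertices, Prod.mk.injEq, ne_eq, kingStep, stepToward] at hp hq hpq hdiag
  refine ⟨(x, y - 1), ?_⟩
  simp only [mem_gadgetVertices, Prod.mk.injEq, chebDist]
  rcases hq with ⟨rfl, rfl⟩ | ⟨rfl, rfl⟩ | hq <;>
    rcases hp with ⟨rfl, rfl⟩ | ⟨rfl, rfl⟩ | hp <;> omega

def gadget (r : ℕ) : SimpleGraph (gadgetVertices r) :=
  kingGraph.induce (gadgetVertices r : Set (ℤ × ℤ))

lemma gadget_adj {r : ℕ} {u w : gadgetVertices r} :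
    (gadget r).Adj u w ↔ u ≠ w ∧ chebDist u w ≤ 1 :=
  and_congr_left' Subtype.coe_ne_coe

lemma gadget_edist {r : ℕ} (u w : gadgetVertices r) :
    (gadget r).edist u w = chebDist u w := by
  refine SimpleGraph.edist_eq_of_geodesic_steps (G := gadget r) (d := fun u w => chebDist u w)
    (fun u w => chebDist_eq_zero.trans Subtype.ext_iff.symm)
    (fun u z w h => (chebDist_triangle _ z _).trans (by have := (gadget_adj.1 h).2; omega))
    (fun u w h => ?_) u w
  obtain ⟨z, hz, huz, hzw⟩ := exists_chebDist_step u.2 w.2 (Subtype.coe_ne_coe.2 h)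
  refine ⟨⟨z, hz⟩, gadget_adj.2 ⟨?_, huz⟩, hzw⟩
  rintro rfl
  simp at hzw

/-- for every `r ≥ 1` there is a finite connected simple graph `F` with three
distinct distinguished vertices `pB`, `pR`, `v` such that `dist(pB, v) = r`,
`dist(pR, v) = r`, `dist(pB, pR) = r + 1`, and every vertex `u` other than `pB` and `pR`
satisfies `dist(u, pB) ≤ r` and `dist(u, pR) ≤ r`.  (This is the forbidden vertex
gadget `F(r)`.) -/
theorem stmt6 (r : ℕ) (hr : 1 ≤ r) :
    ∃ (W : Type) (_ : Fintype W) (F : SimpleGraph W) (pB pR v : W),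
      F.Connected ∧
      pB ≠ pR ∧ pB ≠ v ∧ pR ≠ v ∧
      F.edist pB v = (r : ℕ∞) ∧
      F.edist pR v = (r : ℕ∞) ∧
      F.edist pB pR = ((r : ℕ∞) + 1) ∧
      ∀ u : W, u ≠ pB → u ≠ pR → F.edist u pB ≤ (r : ℕ∞) ∧ F.edist u pR ≤ (r : ℕ∞) := by
  have hpB : ((0, 0) : ℤ × ℤ) ∈ gadgetVertices r := by simp [mem_gadgetVertices]
  refine ⟨gadgetVertices r, inferInstance, gadget r, ⟨(0, 0), hpB⟩,
    ⟨((r : ℤ) + 1, 0), by simp [mem_gadgetVertices]⟩,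
    ⟨(1, r), by simp [mem_gadgetVertices]; omega⟩, ?_, ?_, ?_, ?_, ?_, ?_, ?_, ?_⟩
  · exact (SimpleGraph.connected_iff_exists_forall_reachable _).2
      ⟨⟨(0, 0), hpB⟩, fun w => SimpleGraph.reachable_of_edist_ne_top (by simp [gadget_edist])⟩
  all_goals simp only [ne_eq, Subtype.mk.injEq, Prod.mk.injEq, gadget_edist, ← Nat.cast_succ,
    Nat.cast_inj, Nat.cast_le, chebDist]
  any_goals omega
  rintro ⟨⟨x, y⟩, hu⟩ hne_pB hne_pR
  simp only [mem_gadgetVertices, Subtype.mk.injEq, Prod.mk.injEq] at hu hne_pB hne_pR ⊢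
  omega
end

section
/- For every finite simple graph G and every integer n ≥ 1, there exist a finite simple graph G' with V(G) ⊆ V(G') and disjoint sets Blue_0, Red_0 ⊆ V(G') \ V(G) such that: (a) every vertex of V(G') \ (V(G) ∪ Blue_0 ∪ Red_0) is at graph distance at most n in G' from some vertex of Blue_0 and at distance at most n from some vertex of Red_0; (b) every vertex of V(G) is at distance at least n+1 in G' from every vertex of Blue_0 ∪ Red_0; (c) for distinct u, v ∈ V(G), dist_{G'}(u,v) = n if uv is an edge of G, and dist_{G'}(u,v) ≥ n+1 otherwise; (d) any two distinct vertices of Blue_0 ∪ Red_0 are at distance at least n+1 in G'. -/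
/-!
Subdivide each dart `(u, v)` of `G` (so each edge twice, which is harmless) into a path
`u = s₀, s₁, …, sₙ = v` and hang a gadget below each inner vertex `sⱼ`: a stem of length
`L = ⌊(n-1)/2⌋` down to a foot, which is joined to the vertices `P_A` and `P_{n+1-A}` of an arc
`P₀ … Pₙ₊₁`, where `L + 1 + A = n`. The arc ends `P₀` and `Pₙ₊₁` are the blue and the red vertex.
Upper bounds on distances are witnessed by explicit walks. Each lower bound comes from a potential
`f` on the vertices that changes by at most one along every edge and vanishes at one end, since
then `f y ≤ dist x y`; the inequality `2A + 1 ≥ n` keeps the two ends of an arc `n + 1` apart.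
-/

universe u

namespace SimpleGraph

variable {W : Type*} {G : SimpleGraph W}

theorem edist_le_of_edist_succ_le_one {g : ℕ → W} {a b : ℕ} (hab : a ≤ b)
    (h : ∀ j, a ≤ j → j < b → G.edist (g j) (g (j + 1)) ≤ 1) :
    G.edist (g a) (g b) ≤ (b - a : ℕ) := by
  induction b, hab using Nat.le_induction with
  | base => simp
  | succ b hab ih =>
    calc G.edist (g a) (g (b + 1)) ≤ G.edist (g a) (g b) + G.edist (g b) (g (b + 1)) :=
          G.edist_triangle
      _ ≤ (b - a : ℕ) + 1 :=
          add_le_add (ih fun j h₁ h₂ => h j h₁ (by omega)) (h b hab b.lt_succ_self)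
      _ = (b + 1 - a : ℕ) := by rw [Nat.sub_add_comm hab]; push_cast; rfl

theorem Walk.le_length_add_of_adj_le {f : W → ℕ} (hf : ∀ x y, G.Adj x y → f y ≤ f x + 1)
    {x y : W} (p : G.Walk x y) : f y ≤ p.length + f x := by
  induction p with
  | nil => simp
  | cons h _ ih =>
    have := hf _ _ h
    simp only [Walk.length_cons]
    omega

theorem le_edist_add_of_adj_le {f : W → ℕ} (hf : ∀ x y, G.Adj x y → f y ≤ f x + 1)
    (x y : W) : (f y : ℕ∞) ≤ G.edist x y + f x := by
  by_cases hr : G.Reachable x y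
  · obtain ⟨p, hp⟩ := hr.exists_walk_length_eq_edist
    rw [← hp]
    exact_mod_cast p.le_length_add_of_adj_le hf
  · simp [edist_eq_top_of_not_reachable hr]

end SimpleGraph

namespace ForbiddenGadget

open SimpleGraph

def stemLen (n : ℕ) : ℕ := (n - 1) / 2

/-- The stem foot is joined to the arc vertices `attachPt n` and `n + 1 - attachPt n`. -/
def attachPt (n : ℕ) : ℕ := n - 1 - stemLen n

lemma stemLen_add_attachPt {n : ℕ} (hn : 1 ≤ n) :
    stemLen n + attachPt n + 1 = n ∧ 2 * attachPt n ≤ n + 1 ∧ n + 1 ≤ 2 * attachPt n + 2 := by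
  unfold attachPt stemLen
  omega

variable {V : Type u} (G : SimpleGraph V) (n : ℕ)

/-- The gadget `(d, i)` hangs below the spine vertex `s_{i+1}` of the dart `d`. Its stem vertices
`Sum.inl t`, `t ≤ L`, are at distance `L - t` from the spine, `Sum.inl L` being the spine vertex
itself; `Sum.inr k`, `k ≤ n + 1`, is the arc vertex `P_k`. -/
abbrev Vert : Type u := V ⊕ G.Dart × Fin (n - 1) × (Fin (stemLen n + 1) ⊕ Fin (n + 2))

variable {G n}

def stem (d : G.Dart) (i : Fin (n - 1)) (t : ℕ) : Vert G n :=
  .inr (d, i, .inl ⟨min t (stemLen n), by omega⟩)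

def arc (d : G.Dart) (i : Fin (n - 1)) (k : ℕ) : Vert G n :=
  .inr (d, i, .inr ⟨min k (n + 1), by omega⟩)

def spine (d : G.Dart) (j : ℕ) : Vert G n :=
  if h₀ : j = 0 then .inl d.fst
  else if h : j < n then stem d ⟨j - 1, by omega⟩ (stemLen n)
  else .inl d.snd

variable (G n) in
def Rel (x y : Vert G n) : Prop :=
  (∃ d j, j < n ∧ x = spine d j ∧ y = spine d (j + 1)) ∨
  (∃ d i t, t < stemLen n ∧ x = stem d i t ∧ y = stem d i (t + 1)) ∨
  (∃ d i k, (k = attachPt n ∨ k = n + 1 - attachPt n) ∧ x = stem d i 0 ∧ y = arc d i k) ∨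
  (∃ d i k, k ≤ n ∧ x = arc d i k ∧ y = arc d i (k + 1))

variable (G n) in
def graph : SimpleGraph (Vert G n) := fromRel (Rel G n)

lemma edist_le_one_of_rel {x y : Vert G n} (h : Rel G n x y) : (graph G n).edist x y ≤ 1 := by
  by_cases hxy : x = y
  · simp [hxy]
  · exact edist_le_one_iff_adj_or_eq.2 (.inl ((fromRel_adj _ _ _).2 ⟨hxy, .inl h⟩))

lemma spine_zero (d : G.Dart) : spine (n := n) d 0 = .inl d.fst := rfl

lemma spine_self (hn : 1 ≤ n) (d : G.Dart) : spine (n := n) d n = .inl d.snd := by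
  simp [spine, show n ≠ 0 by omega]

lemma spine_of_lt {d : G.Dart} {j : ℕ} (hj₀ : 0 < j) (hj : j < n) :
    spine (n := n) d j = stem d ⟨j - 1, by omega⟩ (stemLen n) := by
  simp [spine, hj, show j ≠ 0 by omega]

lemma edist_fst_snd_le (hn : 1 ≤ n) (d : G.Dart) :
    (graph G n).edist (.inl d.fst) (.inl d.snd) ≤ n := by
  simpa [spine_zero, spine_self hn] using
    edist_le_of_edist_succ_le_one (G := graph G n) (g := spine d) (Nat.zero_le n)
      fun j _ hj => edist_le_one_of_rel (.inl ⟨d, j, hj, rfl, rfl⟩)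

lemma edist_stem_le (d : G.Dart) (i : Fin (n - 1)) {t : ℕ}
    (ht : t ≤ stemLen n) : (graph G n).edist (stem d i 0) (stem d i t) ≤ t := by
  simpa using edist_le_of_edist_succ_le_one (G := graph G n) (g := stem d i) (Nat.zero_le t)
    fun j _ hj => edist_le_one_of_rel (.inr (.inl ⟨d, i, j, by omega, rfl, rfl⟩))

lemma edist_arc_le (d : G.Dart) (i : Fin (n - 1)) {a b : ℕ} (ha : a ≤ n + 1) (hb : b ≤ n + 1) :
    (graph G n).edist (arc d i a) (arc d i b) ≤ Nat.dist a b := by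
  have of_le : ∀ a b, a ≤ b → b ≤ n + 1 →
      (graph G n).edist (arc d i a) (arc d i b) ≤ Nat.dist a b := fun a b hab hb => by
      simpa [Nat.dist_eq_sub_of_le hab] using
        edist_le_of_edist_succ_le_one (G := graph G n) (g := arc d i) hab
          fun j _ hj => edist_le_one_of_rel (.inr (.inr (.inr ⟨d, i, j, by omega, rfl, rfl⟩)))
  rcases le_total a b with hab | hba
  · exact of_le a b hab hb
  · rw [SimpleGraph.edist_comm, Nat.dist_comm]
    exact of_le b a hba ha

lemma edist_terminal_le {r : ℕ} (hr : r = 0 ∨ r = n + 1) (d : G.Dart)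
    (i : Fin (n - 1)) (x : Fin (stemLen n + 1) ⊕ Fin (n + 2))
    (hx : .inr (d, i, x) ≠ arc d i (n + 1 - r)) :
    (graph G n).edist (.inr (d, i, x)) (arc d i r) ≤ n := by
  obtain ⟨hLA, hA, -⟩ := stemLen_add_attachPt (n := n) (by have := i.isLt; omega)
  rcases x with ⟨t, ht⟩ | ⟨k, hk⟩
  · have hstem : (.inr (d, i, .inl ⟨t, ht⟩) : Vert G n) = stem d i t := by
      simp [stem]
      omega
    set a := if r = 0 then attachPt n else n + 1 - attachPt n
    have hfoot : (graph G n).edist (stem d i 0) (arc d i a) ≤ 1 :=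
      edist_le_one_of_rel (.inr (.inr (.inl ⟨d, i, a, by unfold a; split_ifs <;> simp, rfl, rfl⟩)))
    have harc : (graph G n).edist (arc d i a) (arc d i r) ≤ attachPt n := by
      refine (edist_arc_le d i (by unfold a; split_ifs <;> omega) (by omega)).trans ?_
      unfold a Nat.dist
      split_ifs <;> norm_cast <;> omega
    rw [hstem]
    calc (graph G n).edist (stem d i t) (arc d i r)
        ≤ (graph G n).edist (stem d i t) (stem d i 0) +
            ((graph G n).edist (stem d i 0) (arc d i a) +
              (graph G n).edist (arc d i a) (arc d i r)) :=
          (graph G n).edist_triangle.trans (by gcongr; exact (graph G n).edist_triangle)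
      _ ≤ t + (1 + attachPt n) := by
          gcongr
          rw [SimpleGraph.edist_comm]
          exact edist_stem_le d i (by omega)
      _ ≤ n := by norm_cast; omega
  · have harc : (.inr (d, i, .inr ⟨k, hk⟩) : Vert G n) = arc d i k := by
      simp [arc]
      omega
    have hk' : k ≠ n + 1 - r := fun h => hx (by simp [arc, h])
    rw [harc]
    refine (edist_arc_le d i (by omega) (by omega)).trans ?_
    unfold Nat.dist
    norm_cast
    omega

def IsLipschitz (f : Vert G n → ℕ) : Prop :=
  ∀ x y, Rel G n x y → f x ≤ f y + 1 ∧ f y ≤ f x + 1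

lemma IsLipschitz.le_edist {f : Vert G n → ℕ} (hf : IsLipschitz f) {x y : Vert G n}
    (hx : f x = 0) {m : ℕ} (hm : m ≤ f y) : (m : ℕ∞) ≤ (graph G n).edist x y := by
  have hadj : ∀ a b, (graph G n).Adj a b → f b ≤ f a + 1 := fun a b hab => by
    rcases ((fromRel_adj _ _ _).1 hab).2 with h | h
    exacts [(hf a b h).2, (hf b a h).1]
  simpa [hx] using (Nat.cast_le.2 hm).trans (le_edist_add_of_adj_le hadj x y)

variable (n) in
/-- One less than the distance from the stem foot to the arc vertex `P_k`. -/
def arcDist (k : ℕ) : ℕ := min (Nat.dist k (attachPt n)) (Nat.dist k (n + 1 - attachPt n))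

variable (n) in
/-- The potential equal to `σ` on `V` and to `s d j` at the inner spine vertex `sⱼ` of `d`, which
grows by the distance to the spine inside each gadget. -/
def extend (σ : V → ℕ) (s : G.Dart → ℕ → ℕ) : Vert G n → ℕ
  | .inl v => σ v
  | .inr (d, i, .inl t) => s d (i + 1) + (stemLen n - t)
  | .inr (d, i, .inr k) => s d (i + 1) + stemLen n + 1 + arcDist n k

lemma extend_spine (σ : V → ℕ) (s : G.Dart → ℕ → ℕ) (d : G.Dart) {j : ℕ} (hj : j ≤ n) :
    extend n σ s (spine d j) = if j = 0 then σ d.fst else if j < n then s d j else σ d.snd := by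
  rcases Nat.eq_zero_or_pos j with rfl | hj₀
  · simp [spine_zero, extend]
  rcases hj.lt_or_eq with hj | rfl
  · rw [spine_of_lt hj₀ hj]
    simp [extend, stem, Nat.sub_add_cancel hj₀, hj, hj₀.ne']
  · simp [spine_self hj₀, extend, hj₀.ne']

lemma extend_isLipschitz (σ : V → ℕ) (s : G.Dart → ℕ → ℕ)
    (hspine : ∀ d j, j < n → extend n σ s (spine d j) ≤ extend n σ s (spine d (j + 1)) + 1 ∧
      extend n σ s (spine d (j + 1)) ≤ extend n σ s (spine d j) + 1) :
    IsLipschitz (extend n σ s) := by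
  rintro x y (⟨d, j, hj, rfl, rfl⟩ | ⟨d, i, t, -, rfl, rfl⟩ | ⟨d, i, k, hk, rfl, rfl⟩ |
    ⟨d, i, k, -, rfl, rfl⟩)
  · exact hspine d j hj
  · simp only [extend, stem]
    omega
  · have := stemLen_add_attachPt (n := n) (by have := i.isLt; omega)
    simp only [extend, stem, arc, arcDist, Nat.dist]
    omega
  · simp only [extend, arc, arcDist, Nat.dist]
    omega

variable (G n) in
def depth : Vert G n → ℕ := extend n (fun _ => 0) fun _ j => min j (n - j)

lemma depth_isLipschitz : IsLipschitz (depth G n) := by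
  refine extend_isLipschitz _ _ fun d j hj => ?_
  rw [extend_spine _ _ d hj.le, extend_spine _ _ d (j := j + 1) hj]
  simp only [hj, Nat.add_one_ne_zero, if_true, if_false]
  split_ifs <;> omega

lemma depth_terminal {r : ℕ} (hr : r = 0 ∨ r = n + 1) (d : G.Dart) (i : Fin (n - 1)) :
    n + 1 ≤ depth G n (arc d i r) := by
  have := stemLen_add_attachPt (n := n) (by have := i.isLt; omega)
  simp only [depth, extend, arc, arcDist, Nat.dist]
  omega

open Classical in
variable (G n) in
noncomputable def fromVertex (u : V) : Vert G n → ℕ :=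
  extend n (fun v => if v = u then 0 else if G.Adj u v then n else n + 1)
    fun d j => if d.fst = u then j else if d.snd = u then n - j else n + 1

lemma fromVertex_isLipschitz (u : V) : IsLipschitz (fromVertex G n u) := by
  refine extend_isLipschitz _ _ fun d j hj => ?_
  have hadj := d.adj
  have hne := hadj.ne
  rw [extend_spine _ _ d hj.le, extend_spine _ _ d (j := j + 1) hj]
  simp only [hj, Nat.add_one_ne_zero, if_true, if_false]
  by_cases h₁ : d.fst = u
  · subst h₁
    simp only [if_neg hne.symm, if_pos hadj]
    split_ifs <;> omega
  by_cases h₂ : d.snd = u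
  · subst h₂
    simp only [if_neg hne, if_pos hadj.symm]
    split_ifs <;> omega
  simp only [if_neg h₁, if_neg h₂]
  split_ifs <;> omega

open Classical in
variable (n) in
/-- For `r = 0` or `r = n + 1`, a lower bound for the distance from the terminal `P_r` of the
gadget `(d₀, i₀)`, truncated at `n + 1`: that gadget is left only through its spine vertex, which
is at distance `n`. An arc vertex is reached either along the arc or through the stem foot. -/
noncomputable def fromTerminal (d₀ : G.Dart) (i₀ : Fin (n - 1)) (r : ℕ) : Vert G n → ℕ
  | .inl _ => n + 1
  | .inr (d, i, .inl t) => if d = d₀ ∧ i = i₀ then attachPt n + 1 + t else n + 1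
  | .inr (d, i, .inr k) => if d = d₀ ∧ i = i₀ then
      min (Nat.dist k r) (Nat.dist k r - (n + 1 - attachPt n) + attachPt n + 2) else n + 1

lemma fromTerminal_isLipschitz (d₀ : G.Dart) (i₀ : Fin (n - 1)) {r : ℕ}
    (hr : r = 0 ∨ r = n + 1) : IsLipschitz (fromTerminal n d₀ i₀ r) := by
  obtain ⟨hLA, hA, hA'⟩ := stemLen_add_attachPt (n := n) (by have := i₀.isLt; omega)
  have hspine : ∀ d j, n ≤ fromTerminal n d₀ i₀ r (spine d j) ∧
      fromTerminal n d₀ i₀ r (spine d j) ≤ n + 1 := fun d j => by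
    unfold spine
    split_ifs
    · simp [fromTerminal]
    · simp only [fromTerminal, stem]
      split_ifs <;> omega
    · simp [fromTerminal]
  rintro x y (⟨d, j, -, rfl, rfl⟩ | ⟨d, i, t, -, rfl, rfl⟩ | ⟨d, i, k, hk, rfl, rfl⟩ |
    ⟨d, i, k, -, rfl, rfl⟩)
  · have := hspine d j
    have := hspine d (j + 1)
    omega
  · simp only [fromTerminal, stem]
    split_ifs <;> omega
  · simp only [fromTerminal, stem, arc, Nat.dist]
    split_ifs <;> omega
  · simp only [fromTerminal, arc, Nat.dist]
    split_ifs <;> omega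

lemma fromTerminal_self (d : G.Dart) (i : Fin (n - 1)) {r : ℕ} (hr : r = 0 ∨ r = n + 1) :
    fromTerminal n d i r (arc d i r) = 0 := by
  rcases hr with rfl | rfl <;> simp [fromTerminal, arc]

lemma fromTerminal_of_ne {d d' : G.Dart} {i i' : Fin (n - 1)} {r r' : ℕ}
    (hr : r = 0 ∨ r = n + 1) (hr' : r' = 0 ∨ r' = n + 1) (hne : arc d' i' r' ≠ arc d i r) :
    n + 1 ≤ fromTerminal n d i r (arc d' i' r') := by
  obtain ⟨hLA, hA, hA'⟩ := stemLen_add_attachPt (n := n) (by have := i.isLt; omega)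
  simp only [fromTerminal, arc, Nat.dist]
  split_ifs with h
  · obtain ⟨rfl, rfl⟩ := h
    have : r' ≠ r := fun h => hne (h ▸ rfl)
    omega
  · exact le_rfl

open Classical in
variable (G n) in
noncomputable def terminals [Fintype V] (r : ℕ) : Finset (Vert G n) :=
  Finset.univ.image fun p : G.Dart × Fin (n - 1) => arc p.1 p.2 r

lemma mem_terminals [Fintype V] {r : ℕ} {w : Vert G n} :
    w ∈ terminals G n r ↔ ∃ d i, arc d i r = w := by
  simp [terminals]

lemma exists_of_mem_terminals [Fintype V] {w : Vert G n}
    (hw : w ∈ terminals G n 0 ∨ w ∈ terminals G n (n + 1)) :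
    ∃ r, (r = 0 ∨ r = n + 1) ∧ ∃ d i, arc d i r = w := by
  rcases hw with hw | hw
  exacts [⟨0, .inl rfl, mem_terminals.1 hw⟩, ⟨n + 1, .inr rfl, mem_terminals.1 hw⟩]

end ForbiddenGadget

open ForbiddenGadget

/-- for every finite simple graph `G` and every `n ≥ 1` there is a finite simple
graph `G'` containing the vertices of `G` (via an embedding `ι`), together with disjoint sets
`Blue0`, `Red0` of new vertices, satisfying conditions (a)–(d). -/
theorem stmt9 {V : Type u} [Fintype V] (G : SimpleGraph V) (n : ℕ) (hn : 1 ≤ n) :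
    ∃ (W : Type u) (_ : Fintype W) (G' : SimpleGraph W) (ι : V ↪ W)
      (Blue0 Red0 : Finset W),
      Disjoint Blue0 Red0 ∧ (∀ v : V, ι v ∉ Blue0 ∧ ι v ∉ Red0) ∧
      -- (a) every extra vertex is within distance `n` of `Blue0` and of `Red0`:
      (∀ w : W, (∀ v : V, ι v ≠ w) → w ∉ Blue0 → w ∉ Red0 →
        (∃ b ∈ Blue0, G'.edist w b ≤ (n : ℕ∞)) ∧ (∃ r ∈ Red0, G'.edist w r ≤ (n : ℕ∞))) ∧
      -- (b) every vertex of `V(G)` is at distance at least `n+1` from `Blue0 ∪ Red0`: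
      (∀ v : V, ∀ w : W, w ∈ Blue0 ∨ w ∈ Red0 → (n : ℕ∞) + 1 ≤ G'.edist (ι v) w) ∧
      -- (c) distances between vertices of `V(G)`:
      (∀ u v : V, u ≠ v →
        (G.Adj u v → G'.edist (ι u) (ι v) = (n : ℕ∞)) ∧
        (¬G.Adj u v → (n : ℕ∞) + 1 ≤ G'.edist (ι u) (ι v))) ∧
      -- (d) distinct vertices of `Blue0 ∪ Red0` are at distance at least `n+1`:
      (∀ w₁ w₂ : W, w₁ ∈ Blue0 ∨ w₁ ∈ Red0 → w₂ ∈ Blue0 ∨ w₂ ∈ Red0 → w₁ ≠ w₂ →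
        (n : ℕ∞) + 1 ≤ G'.edist w₁ w₂) := by
  classical
  refine ⟨Vert G n, inferInstance, graph G n, ⟨Sum.inl, Sum.inl_injective⟩, terminals G n 0,
    terminals G n (n + 1), ?_, ?_, ?_, ?_, ?_, ?_⟩
  · refine Finset.disjoint_left.2 fun w hb hr => ?_
    obtain ⟨d, i, rfl⟩ := mem_terminals.1 hb
    obtain ⟨d', i', h⟩ := mem_terminals.1 hr
    simp [arc] at h
  · simp [mem_terminals, arc]
  · rintro (v | ⟨d, i, x⟩) hv hb hr
    · exact absurd rfl (hv v)
    refine ⟨⟨arc d i 0, mem_terminals.2 ⟨d, i, rfl⟩, edist_terminal_le (.inl rfl) d i x ?_⟩,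
      ⟨arc d i (n + 1), mem_terminals.2 ⟨d, i, rfl⟩, edist_terminal_le (.inr rfl) d i x ?_⟩⟩
    · exact fun h => hr (mem_terminals.2 ⟨d, i, by simpa using h.symm⟩)
    · exact fun h => hb (mem_terminals.2 ⟨d, i, by simpa using h.symm⟩)
  · intro v w hw
    obtain ⟨r, hr, d, i, rfl⟩ := exists_of_mem_terminals hw
    exact_mod_cast depth_isLipschitz.le_edist (x := .inl v) rfl (depth_terminal hr d i)
  · intro u v huv
    have hu : fromVertex G n u (.inl u) = 0 := by simp [fromVertex, extend]
    refine ⟨fun hadj => le_antisymm (edist_fst_snd_le hn ⟨(u, v), hadj⟩) ?_, fun hadj => ?_⟩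
    · exact (fromVertex_isLipschitz u).le_edist hu (by simp [fromVertex, extend, huv.symm, hadj])
    · exact_mod_cast (fromVertex_isLipschitz u).le_edist hu
        (by simp [fromVertex, extend, huv.symm, hadj])
  · intro w₁ w₂ h₁ h₂ hne
    obtain ⟨r, hr, d, i, rfl⟩ := exists_of_mem_terminals h₁
    obtain ⟨r', hr', d', i', rfl⟩ := exists_of_mem_terminals h₂
    exact_mod_cast (fromTerminal_isLipschitz d i hr).le_edist (fromTerminal_self d i hr)
      (fromTerminal_of_ne hr hr' hne.symm)
end

section
/- For every finite simple graph G and every integer k ≥ 1, there exist a finite simple graph G' with V(G) ⊆ V(G') and disjoint sets Blue_0, Red_0 ⊆ V(G') \ V(G) such that: (a) every vertex of V(G') \ (V(G) ∪ Blue_0 ∪ Red_0) is at graph distance at most k in G' from some vertex of Blue_0 and at distance at most k from some vertex of Red_0; (b) every vertex of V(G) is at distance at least k+1 in G' from every vertex of Blue_0 ∪ Red_0; (c) for distinct u, v ∈ V(G), dist_{G'}(u,v) = k if uv is an edge of G, and dist_{G'}(u,v) ≥ k+1 otherwise; (d) any two distinct vertices of Blue_0 ∪ Red_0 are at distance at least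 k+1 in G'. -/
/-!
Every edge of `G` becomes a path of length `k`, and from every interior vertex `p` of such a path
hangs a copy of the gadget `F(k)`: a cycle `c₀ … c₂ₖ₊₁` with blue vertex `c₀` and red vertex
`cₖ₊₁`, joined to `p` by a stem so that `p` is at distance exactly `k` from both colours. Every
other gadget vertex is within `k` of both colours, and since the root `p` separates its gadget
from the rest of the graph, each coloured vertex is at distance at least `k + 1` from every
original vertex and from every other coloured vertex.

Upper bounds on distances come from explicit chains of adjacent vertices; lower bounds come from
functions `f` that grow by at most one along each edge, so that `f w ≤ f v + dist v w`. There is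
one such function for each original vertex and one for each coloured vertex.
-/

namespace SimpleGraph

variable {α β : Type*} {G : SimpleGraph α}

theorem Walk.le_add_length_of_lipschitz (f : α → ℕ) (hf : ∀ v w, G.Adj v w → f w ≤ f v + 1)
    {v w : α} (p : G.Walk v w) : f w ≤ f v + p.length := by
  induction p with
  | nil => simp
  | cons h _ ih => have := hf _ _ h; simp only [Walk.length_cons]; omega

theorem le_add_edist_of_lipschitz (f : α → ℕ) (hf : ∀ v w, G.Adj v w → f w ≤ f v + 1)
    (v w : α) : (f w : ℕ∞) ≤ f v + G.edist v w := by
  by_cases hr : G.Reachable v w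
  · obtain ⟨p, hp⟩ := hr.exists_walk_length_eq_edist
    rw [← hp]
    exact_mod_cast p.le_add_length_of_lipschitz f hf
  · simp [edist_eq_top_of_not_reachable hr]

theorem edist_le_of_chain (f : ℕ → α) {m n : ℕ} (hmn : m ≤ n)
    (hf : ∀ i, m ≤ i → i < n → G.Adj (f i) (f (i + 1))) :
    G.edist (f m) (f n) ≤ (n - m : ℕ) := by
  induction n, hmn using Nat.le_induction with
  | base => simp
  | succ n hmn ih =>
    calc G.edist (f m) (f (n + 1)) ≤ G.edist (f m) (f n) + G.edist (f n) (f (n + 1)) :=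
          SimpleGraph.edist_triangle
      _ ≤ (n - m : ℕ) + 1 := by
          gcongr
          · exact ih fun i hi hin => hf i hi (by omega)
          · exact (edist_eq_one_iff_adj.mpr (hf n hmn (by omega))).le
      _ = (n + 1 - m : ℕ) := by push_cast [Nat.sub_add_comm hmn]; rfl

theorem Hom.edist_le {H : SimpleGraph β} (φ : G →g H) (u v : α) :
    H.edist (φ u) (φ v) ≤ G.edist u v := by
  by_cases hr : G.Reachable u v
  · obtain ⟨p, hp⟩ := hr.exists_walk_length_eq_edist
    rw [← hp, ← p.length_map φ]
    exact SimpleGraph.edist_le _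
  · simp [edist_eq_top_of_not_reachable hr]

theorem fromRel_lipschitz {r : α → α → Prop} (f : α → ℕ)
    (hf : ∀ v w, r v w → f w ≤ f v + 1 ∧ f v ≤ f w + 1) :
    ∀ v w, (fromRel r).Adj v w → f w ≤ f v + 1 := by
  rintro v w ⟨-, h | h⟩
  exacts [(hf v w h).1, (hf w v h).2]

end SimpleGraph

open SimpleGraph

namespace ForbiddenGadget

section Gadget

def cycleDist (n i j : ℕ) : ℕ := min (Nat.dist i j) (n - Nat.dist i j)

lemma cycleDist_comm (n i j : ℕ) : cycleDist n i j = cycleDist n j i := by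
  simp only [cycleDist, Nat.dist_comm]

/-- The stem vertex `inl i` is `sᵢ`, with `s₀` the root that lies on the path, and `inr j` is
`cⱼ`. The last stem vertex is joined to `c_⌈k/2⌉` and `c_(⌊k/2⌋+1)` (one vertex when `k` is odd),
which puts `s₀` at distance `k` from both `c₀` and `cₖ₊₁`. -/
abbrev GadgetVert (k : ℕ) := Fin (k / 2) ⊕ Fin (2 * k + 2)

def cyc (k j : ℕ) : GadgetVert k := .inr ⟨j % (2 * k + 2), Nat.mod_lt _ (by omega)⟩

def gadgetRel (k : ℕ) : GadgetVert k → GadgetVert k → Prop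
  | .inl i, .inl i' => i'.val = i.val + 1
  | .inl i, .inr j => i.val + 1 = k / 2 ∧ (j.val = k - k / 2 ∨ j.val = k / 2 + 1)
  | .inr j, .inr j' => j'.val = j.val + 1 ∨ (j.val = 2 * k + 1 ∧ j'.val = 0)
  | .inr _, .inl _ => False

def gadget (k : ℕ) : SimpleGraph (GadgetVert k) := fromRel (gadgetRel k)

/-- The distance from `cⱼ₀` in the gadget, for `j₀ ∈ {0, k + 1}`: each `sᵢ` is `k - i` away from
both colours. -/
def colourDepth (k j₀ : ℕ) : GadgetVert k → ℕ :=
  Sum.elim (fun i => k - i) (fun j => cycleDist (2 * k + 2) j j₀)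

variable {k j₀ : ℕ}

lemma cyc_val (j : Fin (2 * k + 2)) : cyc k j = .inr j := by
  simp [cyc, Nat.mod_eq_of_lt j.isLt]

lemma gadget_adj_cyc_succ (j : ℕ) : (gadget k).Adj (cyc k j) (cyc k (j + 1)) := by
  have hlt : j % (2 * k + 2) < 2 * k + 2 := Nat.mod_lt _ (by omega)
  have hsucc : (j + 1) % (2 * k + 2) =
      if j % (2 * k + 2) + 1 = 2 * k + 2 then 0 else j % (2 * k + 2) + 1 := by
    rw [← Nat.mod_add_mod]
    split_ifs with h
    · rw [h, Nat.mod_self]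
    · exact Nat.mod_eq_of_lt (by omega)
  refine ⟨?_, Or.inl ?_⟩
  · simp only [cyc, ne_eq, Sum.inr.injEq, Fin.mk.injEq, hsucc]
    split_ifs <;> omega
  · simp only [cyc, gadgetRel, hsucc]
    split_ifs <;> omega

lemma gadget_edist_cyc_le {i j : ℕ} (hij : i ≤ j) :
    (gadget k).edist (cyc k i) (cyc k j) ≤ (j - i : ℕ) :=
  edist_le_of_chain (cyc k) hij fun t _ _ => gadget_adj_cyc_succ t

lemma gadget_edist_cyc_le_cycleDist {i j : ℕ} (hi : i < 2 * k + 2) (hj : j < 2 * k + 2) :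
    (gadget k).edist (cyc k i) (cyc k j) ≤ cycleDist (2 * k + 2) i j := by
  wlog hij : i ≤ j generalizing i j
  · rw [edist_comm, cycleDist_comm]
    exact this hj hi (by omega)
  have hwrap : (gadget k).edist (cyc k j) (cyc k (2 * k + 2 + i)) ≤ (2 * k + 2 + i - j : ℕ) :=
    gadget_edist_cyc_le (by omega)
  have hcyc : cyc k (2 * k + 2 + i) = cyc k i := by simp [cyc]
  rw [hcyc, edist_comm] at hwrap
  have hdist : cycleDist (2 * k + 2) i j = min (j - i) (2 * k + 2 + i - j) := by
    simp only [cycleDist, Nat.dist]; congr 1 <;> omega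
  rw [hdist, Nat.mono_cast.map_min]
  exact le_min (gadget_edist_cyc_le hij) hwrap

lemma gadget_edist_stem_le (i : Fin (k / 2)) {j : ℕ} (hj : j = k - k / 2 ∨ j = k / 2 + 1) :
    (gadget k).edist (.inl i) (cyc k j) ≤ (k / 2 - i : ℕ) := by
  let spine : ℕ → GadgetVert k := fun t => if h : t < k / 2 then .inl ⟨t, h⟩ else cyc k j
  have hspine := edist_le_of_chain (G := gadget k) spine i.isLt.le fun t _ ht => by
    refine ⟨?_, Or.inl ?_⟩
    · by_cases ht' : t + 1 < k / 2 <;> simp [spine, ht, ht', cyc]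
    · by_cases ht' : t + 1 < k / 2
      · simp [spine, ht, ht', gadgetRel]
      · simp only [spine, dif_pos ht, dif_neg ht', cyc, gadgetRel]
        have : j < 2 * k + 2 := by omega
        rw [Nat.mod_eq_of_lt this]; omega
  simpa [spine] using hspine

lemma gadget_edist_le_colourDepth (hj₀ : j₀ = 0 ∨ j₀ = k + 1) (g : GadgetVert k) :
    (gadget k).edist g (cyc k j₀) ≤ colourDepth k j₀ g := by
  rcases g with i | j
  · obtain ⟨m, hm, hmj⟩ : ∃ m, (m = k - k / 2 ∨ m = k / 2 + 1) ∧
        cycleDist (2 * k + 2) m j₀ = k - k / 2 := by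
      rcases hj₀ with rfl | rfl
      · exact ⟨k - k / 2, Or.inl rfl, by simp only [cycleDist, Nat.dist]; omega⟩
      · exact ⟨k / 2 + 1, Or.inr rfl, by simp only [cycleDist, Nat.dist]; omega⟩
    calc (gadget k).edist (.inl i) (cyc k j₀)
        ≤ (gadget k).edist (.inl i) (cyc k m) + (gadget k).edist (cyc k m) (cyc k j₀) :=
          SimpleGraph.edist_triangle
      _ ≤ (k / 2 - i : ℕ) + cycleDist (2 * k + 2) m j₀ := by
          gcongr
          · exact gadget_edist_stem_le i hm
          · exact gadget_edist_cyc_le_cycleDist (by omega) (by omega)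
      _ = colourDepth k j₀ (.inl i) := by
          have := i.isLt
          rw [hmj, colourDepth, Sum.elim_inl]
          norm_cast
          omega
  · rw [← cyc_val j]
    simpa [colourDepth, cyc, Nat.mod_eq_of_lt j.isLt] using
      gadget_edist_cyc_le_cycleDist (k := k) j.isLt (by omega : j₀ < 2 * k + 2)

lemma colourDepth_lipschitz (hj₀ : j₀ = 0 ∨ j₀ = k + 1) :
    ∀ g g', (gadget k).Adj g g' → colourDepth k j₀ g' ≤ colourDepth k j₀ g + 1 := by
  refine fromRel_lipschitz _ ?_
  rintro (i | j) (i' | j') h <;>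
    simp only [gadgetRel] at h <;>
    simp only [colourDepth, Sum.elim_inl, Sum.elim_inr, cycleDist, Nat.dist] <;>
    omega

end Gadget

section Subdivision

variable {V : Type*} (G : SimpleGraph V) (k : ℕ)

/-- Each dart, i.e. each edge in each orientation, carries its own path; parallel paths do not
change any distance. `inr (d, a, g)` is the vertex `g` of the gadget at position `a + 1` on the
path of `d`. -/
abbrev SubdivVert := V ⊕ (G.Dart × Fin (k - 1) × GadgetVert k)

def pathVertex (d : G.Dart) (p : ℕ) : SubdivVert G k :=
  if h : 0 < p ∧ p < k then .inr (d, ⟨p - 1, by omega⟩, .inl ⟨0, by omega⟩)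
  else if p = 0 then .inl d.fst else .inl d.snd

def subdivRel (w w' : SubdivVert G k) : Prop :=
  (∃ d p, p < k ∧ w = pathVertex G k d p ∧ w' = pathVertex G k d (p + 1)) ∨
  ∃ d a g g', (gadget k).Adj g g' ∧ w = .inr (d, a, g) ∧ w' = .inr (d, a, g')

def subdiv : SimpleGraph (SubdivVert G k) := fromRel (subdivRel G k)

def gadgetCopy (d : G.Dart) (a : Fin (k - 1)) : gadget k →g subdiv G k where
  toFun g := .inr (d, a, g)
  map_rel' {g g'} h := ⟨by simpa using h.ne, Or.inl (Or.inr ⟨d, a, g, g', h, rfl, rfl⟩)⟩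

variable {G k}

lemma subdiv_adj_pathVertex (d : G.Dart) {p : ℕ} (hp : p < k) :
    (subdiv G k).Adj (pathVertex G k d p) (pathVertex G k d (p + 1)) := by
  refine ⟨?_, Or.inl (Or.inl ⟨d, p, hp, rfl, rfl⟩)⟩
  unfold pathVertex
  split_ifs <;> simp_all
  omega

lemma subdiv_edist_le_of_adj (hk : 1 ≤ k) {u v : V} (h : G.Adj u v) :
    (subdiv G k).edist (.inl u) (.inl v) ≤ k := by
  have hchain := edist_le_of_chain (pathVertex G k ⟨(u, v), h⟩) (Nat.zero_le k)
    fun p _ hp => subdiv_adj_pathVertex _ hp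
  simpa [pathVertex, show k ≠ 0 by omega] using hchain

variable (G k) [DecidableEq V]

def lowerDistFromColour (d₀ : G.Dart) (a₀ : Fin (k - 1)) (j₀ : ℕ) : SubdivVert G k → ℕ
  | .inl _ => k + 1
  | .inr (d, a, g) => if d = d₀ ∧ a = a₀ then colourDepth k j₀ g else k + 1

def pathBase (u : V) (d : G.Dart) (p : ℕ) : ℕ :=
  if d.fst = u then p else if d.snd = u then k - p else k + 1

def rootGap : GadgetVert k → ℕ := Sum.elim (fun i => min i.val 1) (fun _ => 1)

def lowerDistFrom [DecidableRel G.Adj] (u : V) : SubdivVert G k → ℕ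
  | .inl v => if v = u then 0 else if G.Adj u v then k else k + 1
  | .inr (d, a, g) => min (k + 1) (pathBase G k u d (a + 1) + rootGap k g)

variable {G k}

lemma lowerDistFromColour_pathVertex (d₀ : G.Dart) (a₀ : Fin (k - 1)) (j₀ : ℕ) (d : G.Dart)
    (p : ℕ) : k ≤ lowerDistFromColour G k d₀ a₀ j₀ (pathVertex G k d p) ∧
      lowerDistFromColour G k d₀ a₀ j₀ (pathVertex G k d p) ≤ k + 1 := by
  unfold pathVertex
  split_ifs
  · simp only [lowerDistFromColour, colourDepth, Sum.elim_inl]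
    split_ifs <;> omega
  all_goals simp [lowerDistFromColour]

lemma lowerDistFromColour_lipschitz (d₀ : G.Dart) (a₀ : Fin (k - 1)) {j₀ : ℕ}
    (hj₀ : j₀ = 0 ∨ j₀ = k + 1) :
    ∀ w w', (subdiv G k).Adj w w' →
      lowerDistFromColour G k d₀ a₀ j₀ w' ≤ lowerDistFromColour G k d₀ a₀ j₀ w + 1 := by
  refine fromRel_lipschitz _ ?_
  rintro w w' (⟨d, p, -, rfl, rfl⟩ | ⟨d, a, g, g', hg, rfl, rfl⟩)
  · have := lowerDistFromColour_pathVertex d₀ a₀ j₀ d p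
    have := lowerDistFromColour_pathVertex d₀ a₀ j₀ d (p + 1)
    omega
  · simp only [lowerDistFromColour]
    split_ifs
    · exact ⟨colourDepth_lipschitz hj₀ g g' hg, colourDepth_lipschitz hj₀ g' g hg.symm⟩
    · omega

variable [DecidableRel G.Adj]

lemma lowerDistFrom_pathVertex (u : V) (d : G.Dart) {p : ℕ} (hp : p ≤ k) :
    (d.fst = u → lowerDistFrom G k u (pathVertex G k d p) = p) ∧
    (d.snd = u → lowerDistFrom G k u (pathVertex G k d p) = k - p) ∧
    (d.fst ≠ u → d.snd ≠ u →
      k ≤ lowerDistFrom G k u (pathVertex G k d p) ∧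
      lowerDistFrom G k u (pathVertex G k d p) ≤ k + 1) := by
  obtain ⟨⟨x, y⟩, hxy⟩ := d
  have hne : x ≠ y := hxy.ne
  by_cases hx : x = u
  · subst hx
    refine ⟨fun _ => ?_, fun h => absurd h hne.symm, fun h => absurd rfl h⟩
    unfold pathVertex
    split_ifs <;> simp [lowerDistFrom, pathBase, rootGap, hne.symm, hxy] <;> omega
  by_cases hy : y = u
  · subst hy
    refine ⟨fun h => absurd h hx, fun _ => ?_, fun _ h => absurd rfl h⟩
    unfold pathVertex
    split_ifs <;> simp [lowerDistFrom, pathBase, rootGap, hx, hxy.symm] <;> omega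
  refine ⟨fun h => absurd h hx, fun h => absurd h hy, fun _ _ => ?_⟩
  unfold pathVertex
  split_ifs <;> simp [lowerDistFrom, pathBase, rootGap, hx, hy] <;> split_ifs <;> omega

lemma lowerDistFrom_lipschitz (u : V) :
    ∀ w w', (subdiv G k).Adj w w' → lowerDistFrom G k u w' ≤ lowerDistFrom G k u w + 1 := by
  refine fromRel_lipschitz _ ?_
  rintro w w' (⟨d, p, hp, rfl, rfl⟩ | ⟨d, a, g, g', -, rfl, rfl⟩)
  · obtain ⟨h₁, h₂, h₃⟩ := lowerDistFrom_pathVertex u d hp.le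
    obtain ⟨h₁', h₂', h₃'⟩ := lowerDistFrom_pathVertex u d (show p + 1 ≤ k by omega)
    by_cases hu : d.fst = u
    · rw [h₁ hu, h₁' hu]; omega
    by_cases hu' : d.snd = u
    · rw [h₂ hu', h₂' hu']; omega
    have := h₃ hu hu'; have := h₃' hu hu'; omega
  · have hgap : ∀ g : GadgetVert k, rootGap k g ≤ 1 := by
      rintro (i | j) <;> simp [rootGap]
    have := hgap g; have := hgap g'
    simp only [lowerDistFrom]
    omega

end Subdivision

section Distances

variable {V : Type*} {G : SimpleGraph V} {k j₀ : ℕ}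

lemma colourDepth_cyc_self (hj₀ : j₀ < 2 * k + 2) : colourDepth k j₀ (cyc k j₀) = 0 := by
  simp [colourDepth, cyc, cycleDist, Nat.mod_eq_of_lt hj₀]

lemma colourDepth_le_of_ne (hj₀ : j₀ = 0 ∨ j₀ = k + 1) {g : GadgetVert k}
    (hg : g ≠ cyc k (k + 1 - j₀)) : colourDepth k j₀ g ≤ k := by
  rcases g with i | j
  · simp [colourDepth]
  · have hj : j.val ≠ k + 1 - j₀ := fun h => hg (by rw [← h, cyc_val])
    simp only [colourDepth, Sum.elim_inr, cycleDist, Nat.dist]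
    omega

lemma subdiv_edist_colour_le (hj₀ : j₀ = 0 ∨ j₀ = k + 1) (d : G.Dart) (a : Fin (k - 1))
    {g : GadgetVert k} (hg : g ≠ cyc k (k + 1 - j₀)) :
    (subdiv G k).edist (.inr (d, a, g)) (.inr (d, a, cyc k j₀)) ≤ k :=
  calc (subdiv G k).edist (.inr (d, a, g)) (.inr (d, a, cyc k j₀))
      ≤ (gadget k).edist g (cyc k j₀) := (gadgetCopy G k d a).edist_le g _
    _ ≤ colourDepth k j₀ g := gadget_edist_le_colourDepth hj₀ g
    _ ≤ k := by exact_mod_cast colourDepth_le_of_ne hj₀ hg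

lemma lowerDistFromColour_le_subdiv_edist [DecidableEq V] (hj₀ : j₀ = 0 ∨ j₀ = k + 1)
    (d : G.Dart) (a : Fin (k - 1)) (w : SubdivVert G k) :
    (lowerDistFromColour G k d a j₀ w : ℕ∞) ≤ (subdiv G k).edist (.inr (d, a, cyc k j₀)) w := by
  simpa [lowerDistFromColour, colourDepth_cyc_self (show j₀ < 2 * k + 2 by omega)] using
    le_add_edist_of_lipschitz _ (lowerDistFromColour_lipschitz d a hj₀) (.inr (d, a, cyc k j₀)) w

lemma le_subdiv_edist_inl_colour (hj₀ : j₀ = 0 ∨ j₀ = k + 1) (v : V) (d : G.Dart)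
    (a : Fin (k - 1)) : (k : ℕ∞) + 1 ≤ (subdiv G k).edist (.inl v) (.inr (d, a, cyc k j₀)) := by
  classical
  rw [edist_comm]
  simpa [lowerDistFromColour] using lowerDistFromColour_le_subdiv_edist hj₀ d a (.inl v)

lemma le_subdiv_edist_colour_colour {j₁ : ℕ} (hj₀ : j₀ = 0 ∨ j₀ = k + 1)
    (hj₁ : j₁ = 0 ∨ j₁ = k + 1) {d d' : G.Dart} {a a' : Fin (k - 1)}
    (hne : (.inr (d, a, cyc k j₀) : SubdivVert G k) ≠ .inr (d', a', cyc k j₁)) :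
    (k : ℕ∞) + 1 ≤ (subdiv G k).edist (.inr (d, a, cyc k j₀)) (.inr (d', a', cyc k j₁)) := by
  classical
  refine le_trans ?_ (lowerDistFromColour_le_subdiv_edist hj₀ d a _)
  simp only [lowerDistFromColour]
  split_ifs with h
  · obtain ⟨rfl, rfl⟩ := h
    have hj : j₀ ≠ j₁ := by rintro rfl; exact hne rfl
    simp only [colourDepth, cyc, Sum.elim_inr, cycleDist, Nat.dist]
    rw [Nat.mod_eq_of_lt (by omega)]
    norm_cast
    omega
  · push_cast; rfl

lemma lowerDistFrom_le_subdiv_edist [DecidableEq V] [DecidableRel G.Adj] (u : V)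
    (w : SubdivVert G k) : (lowerDistFrom G k u w : ℕ∞) ≤ (subdiv G k).edist (.inl u) w := by
  simpa [lowerDistFrom] using le_add_edist_of_lipschitz _ (lowerDistFrom_lipschitz u) (.inl u) w

lemma subdiv_edist_inl_eq_of_adj (hk : 1 ≤ k) {u v : V} (h : G.Adj u v) :
    (subdiv G k).edist (.inl u) (.inl v) = k := by
  classical
  refine le_antisymm (subdiv_edist_le_of_adj hk h) ?_
  simpa [lowerDistFrom, h, h.ne.symm] using
    lowerDistFrom_le_subdiv_edist (G := G) (k := k) u (.inl v)

lemma le_subdiv_edist_inl_of_not_adj {u v : V} (huv : u ≠ v) (h : ¬G.Adj u v) :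
    (k : ℕ∞) + 1 ≤ (subdiv G k).edist (.inl u) (.inl v) := by
  classical
  simpa [lowerDistFrom, h, huv.symm] using
    lowerDistFrom_le_subdiv_edist (G := G) (k := k) u (.inl v)

section ColourSets

variable (G k) [Fintype V] [DecidableRel G.Adj]

def colourSet (j₀ : ℕ) : Finset (SubdivVert G k) :=
  Finset.univ.map ⟨fun x : G.Dart × Fin (k - 1) => .inr (x.1, x.2, cyc k j₀),
    fun x y h => by simpa [Prod.ext_iff] using h⟩

variable {G k}

lemma mem_colourSet {w : SubdivVert G k} :
    w ∈ colourSet G k j₀ ↔ ∃ d a, w = .inr (d, a, cyc k j₀) := by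
  simp only [colourSet, Finset.mem_map, Finset.mem_univ, true_and, Prod.exists, eq_comm]
  rfl

lemma colourSet_disjoint : Disjoint (colourSet G k 0) (colourSet G k (k + 1)) := by
  rw [Finset.disjoint_left]
  intro w h₀ h₁
  obtain ⟨d, a, rfl⟩ := mem_colourSet.mp h₀
  obtain ⟨d', a', h⟩ := mem_colourSet.mp h₁
  simp [cyc, Nat.mod_eq_of_lt (show k + 1 < 2 * k + 2 by omega)] at h

lemma exists_cyc_of_mem_colourSet {w : SubdivVert G k}
    (h : w ∈ colourSet G k 0 ∨ w ∈ colourSet G k (k + 1)) :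
    ∃ d a j₀, (j₀ = 0 ∨ j₀ = k + 1) ∧ w = .inr (d, a, cyc k j₀) := by
  rcases h with h | h <;> obtain ⟨d, a, rfl⟩ := mem_colourSet.mp h
  exacts [⟨d, a, 0, Or.inl rfl, rfl⟩, ⟨d, a, k + 1, Or.inr rfl, rfl⟩]

end ColourSets

end Distances

end ForbiddenGadget

open ForbiddenGadget

/-- for every finite simple graph `G` and every `k ≥ 1` there is a finite simple
graph `G'` containing the vertices of `G` (via an embedding `ι`), together with disjoint sets
`Blue0`, `Red0` of new vertices, satisfying conditions (a)–(d). -/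
theorem stmt14 {V : Type u} [Fintype V] (G : SimpleGraph V) (k : ℕ) (hk : 1 ≤ k) :
    ∃ (W : Type u) (_ : Fintype W) (G' : SimpleGraph W) (ι : V ↪ W)
      (Blue0 Red0 : Finset W),
      Disjoint Blue0 Red0 ∧ (∀ v : V, ι v ∉ Blue0 ∧ ι v ∉ Red0) ∧
      -- (a) every extra vertex is within distance `k` of `Blue0` and of `Red0`:
      (∀ w : W, (∀ v : V, ι v ≠ w) → w ∉ Blue0 → w ∉ Red0 →
        (∃ b ∈ Blue0, G'.edist w b ≤ (k : ℕ∞)) ∧ (∃ r ∈ Red0, G'.edist w r ≤ (k : ℕ∞))) ∧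
      -- (b) every vertex of `V(G)` is at distance at least `k+1` from `Blue0 ∪ Red0`:
      (∀ v : V, ∀ w : W, w ∈ Blue0 ∨ w ∈ Red0 → (k : ℕ∞) + 1 ≤ G'.edist (ι v) w) ∧
      -- (c) distances between vertices of `V(G)`:
      (∀ u v : V, u ≠ v →
        (G.Adj u v → G'.edist (ι u) (ι v) = (k : ℕ∞)) ∧
        (¬G.Adj u v → (k : ℕ∞) + 1 ≤ G'.edist (ι u) (ι v))) ∧
      -- (d) distinct vertices of `Blue0 ∪ Red0` are at distance at least `k+1`:
      (∀ w₁ w₂ : W, w₁ ∈ Blue0 ∨ w₁ ∈ Red0 → w₂ ∈ Blue0 ∨ w₂ ∈ Red0 → w₁ ≠ w₂ →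
        (k : ℕ∞) + 1 ≤ G'.edist w₁ w₂) := by
  classical
  refine ⟨SubdivVert G k, inferInstance, subdiv G k, .inl, colourSet G k 0,
    colourSet G k (k + 1), colourSet_disjoint, fun v => by simp [mem_colourSet], ?_,
    fun v w hw => ?_,
    fun u v huv => ⟨subdiv_edist_inl_eq_of_adj hk, le_subdiv_edist_inl_of_not_adj huv⟩,
    fun w₁ w₂ h₁ h₂ hne => ?_⟩
  · rintro (v | ⟨d, a, g⟩) hv hb hr
    · exact absurd rfl (hv v)
    refine ⟨⟨_, mem_colourSet.mpr ⟨d, a, rfl⟩, subdiv_edist_colour_le (Or.inl rfl) d a ?_⟩,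
      ⟨_, mem_colourSet.mpr ⟨d, a, rfl⟩, subdiv_edist_colour_le (Or.inr rfl) d a ?_⟩⟩
    · rintro rfl; exact hr (mem_colourSet.mpr ⟨d, a, rfl⟩)
    · rintro rfl; exact hb (mem_colourSet.mpr ⟨d, a, by simp⟩)
  · obtain ⟨d, a, j₀, hj₀, rfl⟩ := exists_cyc_of_mem_colourSet hw
    exact le_subdiv_edist_inl_colour hj₀ v d a
  · obtain ⟨d, a, j₀, hj₀, rfl⟩ := exists_cyc_of_mem_colourSet h₁
    obtain ⟨d', a', j₁, hj₁, rfl⟩ := exists_cyc_of_mem_colourSet h₂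
    exact le_subdiv_edist_colour_colour hj₀ hj₁ hne
end
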